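/- The entropy rate of the neutral Moran process with boundary mutations and fixed μ tends to 0 as N → ∞. -/

import Mathlib

open Finset

/-- Stationary distribution of the neutral boundary-mutation Moran process,
written with the harmonic number h_{N-1} = Σ_{k=1}^{N-1} 1/k. -/
noncomputable def moranBoundaryStatH (N : ℕ) (μ : ℝ) (j : ℕ) : ℝ :=
  if j = 0 ∨ j = N then
    (2 + 2 * μ * (N : ℝ) * ∑ k ∈ Ico 1 N, (1 : ℝ) / (k : ℝ))⁻¹
  else
    (2 + 2 * μ * (N : ℝ) * ∑ k ∈ Ico 1 N, (1 : ℝ) / (k : ℝ))⁻¹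
      * (μ * (N : ℝ) ^ 2 / ((j : ℝ) * ((N : ℝ) - j)))

/-- Shannon entropy of the transition row at state i of the neutral boundary-mutation
Moran process. -/
noncomputable def moranBoundaryRowEntropy (N : ℕ) (μ : ℝ) (i : ℕ) : ℝ :=
  if i = 0 ∨ i = N then -(μ * Real.log μ + (1 - μ) * Real.log (1 - μ))
  else
    -( 2 * ((i : ℝ) * ((N : ℝ) - i) / (N : ℝ) ^ 2
          * Real.log ((i : ℝ) * ((N : ℝ) - i) / (N : ℝ) ^ 2))
      + (1 - 2 * (i : ℝ) * ((N : ℝ) - i) / (N : ℝ) ^ 2)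
          * Real.log (1 - 2 * (i : ℝ) * ((N : ℝ) - i) / (N : ℝ) ^ 2) )

/-!
An interior state `i` has stationary weight `s₀ μ / q` with `q = i (N - i) / N²`, and its row
entropy `2 q log q⁻¹ - (1 - 2q) log (1 - 2q)` is at most `q (2 log q⁻¹ + 2)`. Hence the interior
contributes at most `s₀ μ ∑ (2 log (N / i) + 2 log (N / (N - i)) + 2) ≤ 6 μ N s₀`, using
`log (N^N / N!) ≤ N`, and the two boundary states at most `2 s₀`. Since `h_{N-1} ≥ log N` gives
`s₀ N ≤ 1 / (2 μ log N)`, the entropy rate is `O(1 / log N)`.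
-/

open Real
open scoped Nat

lemma two_mul_negMulLog_add_negMulLog_one_sub_two_mul_le {q : ℝ} (hq : 2 * q ≤ 1) :
    2 * negMulLog q + negMulLog (1 - 2 * q) ≤ q * (2 * log q⁻¹ + 2) := by
  have h := negMulLog_le_one_sub_self (x := 1 - 2 * q) (by linarith)
  simp only [negMulLog, log_inv] at h ⊢
  linarith

lemma binEntropy_le_one (p : ℝ) : binEntropy p ≤ 1 :=
  binEntropy_le_log_two.trans (by linarith [log_two_lt_d9])

lemma sum_Ico_log_div_le (N : ℕ) : ∑ i ∈ Ico 1 N, log ((N : ℝ) / i) ≤ N := by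
  rcases N.eq_zero_or_pos with rfl | hN
  · simp
  have hpos : ∀ i ∈ Ico 1 (N + 1), 0 < (N : ℝ) / i := fun i hi =>
    div_pos (by exact_mod_cast hN) (by exact_mod_cast (mem_Ico.1 hi).1)
  have hprod : ∏ i ∈ Ico 1 (N + 1), ((N : ℝ) / i) = (N : ℝ) ^ N / N ! := by
    rw [prod_div_distrib, prod_const, Nat.card_Ico, Nat.add_sub_cancel, ← prod_Ico_id_eq_factorial,
      Nat.cast_prod]
  calc ∑ i ∈ Ico 1 N, log ((N : ℝ) / i) = ∑ i ∈ Ico 1 (N + 1), log ((N : ℝ) / i) := by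
        rw [sum_Ico_succ_top hN, div_self (Nat.cast_pos.2 hN).ne', log_one, add_zero]
    _ = log ((N : ℝ) ^ N / N !) := by rw [← hprod, log_prod fun i hi => (hpos i hi).ne']
    _ ≤ log (exp N) :=
        log_le_log (hprod ▸ prod_pos hpos) (pow_div_factorial_le_exp _ (Nat.cast_nonneg N) N)
    _ = N := log_exp _

lemma sum_Ico_log_div_sub_eq (N : ℕ) :
    ∑ i ∈ Ico 1 N, log ((N : ℝ) / (N - i)) = ∑ i ∈ Ico 1 N, log ((N : ℝ) / i) := by
  have hcast : ∀ i ∈ Ico 1 N, log ((N : ℝ) / (N - i)) = log ((N : ℝ) / ((N - i : ℕ) : ℝ)) := by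
    intro i hi
    rw [Nat.cast_sub (mem_Ico.1 hi).2.le]
  rw [sum_congr rfl hcast, sum_Ico_reflect (fun j => log ((N : ℝ) / j)) 1 (Nat.le_succ N)]
  congr 1
  rw [Nat.add_sub_cancel_left, Nat.add_sub_cancel]

lemma log_le_sum_Ico_one_div (N : ℕ) : log N ≤ ∑ k ∈ Ico 1 N, (1 : ℝ) / k := by
  cases N with
  | zero => simp
  | succ n =>
    have h := log_add_one_le_harmonic n
    rw [harmonic_eq_sum_Icc] at h
    push_cast at h
    simpa [Ico_add_one_right_eq_Icc] using h

/-- The interior transition probability `T_{i→i+1} = T_{i→i-1}`. -/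
noncomputable def moranStepProb (N i : ℕ) : ℝ := (i : ℝ) * ((N : ℝ) - i) / (N : ℝ) ^ 2

noncomputable def moranBoundaryEntropyRate (N : ℕ) (μ : ℝ) : ℝ :=
  ∑ i ∈ range (N + 1), moranBoundaryStatH N μ i * moranBoundaryRowEntropy N μ i

section
variable {N i : ℕ} {μ : ℝ}

lemma moranStepProb_nonneg (h : i ≤ N) : 0 ≤ moranStepProb N i :=
  div_nonneg (mul_nonneg (Nat.cast_nonneg i) (sub_nonneg.2 (by exact_mod_cast h))) (sq_nonneg _)

lemma moranStepProb_pos (h0 : 0 < i) (hN : i < N) : 0 < moranStepProb N i := by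
  have hi : (0 : ℝ) < i := by exact_mod_cast h0
  exact div_pos (mul_pos hi (sub_pos.2 (by exact_mod_cast hN)))
    (pow_pos (hi.trans (by exact_mod_cast hN)) 2)

lemma two_mul_moranStepProb_le_one (N i : ℕ) : 2 * moranStepProb N i ≤ 1 := by
  unfold moranStepProb
  rcases eq_or_ne N 0 with rfl | hN
  · simp
  rw [mul_div_assoc', div_le_one (by positivity)]
  nlinarith [sq_nonneg ((i : ℝ) - ((N : ℝ) - i))]

lemma log_moranStepProb_inv (h0 : 0 < i) (hN : i < N) :
    log (moranStepProb N i)⁻¹ = log ((N : ℝ) / i) + log ((N : ℝ) / (N - i)) := by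
  have hi : (0 : ℝ) < i := by exact_mod_cast h0
  have hNi : (0 : ℝ) < N - i := sub_pos.2 (by exact_mod_cast hN)
  have hN0 : (0 : ℝ) < N := hi.trans (by exact_mod_cast hN)
  rw [← log_mul (by positivity) (by positivity), moranStepProb]
  congr 1
  field_simp

lemma moranBoundaryStatH_of_eq (h : i = 0 ∨ i = N) :
    moranBoundaryStatH N μ i = moranBoundaryStatH N μ 0 := by
  simp only [moranBoundaryStatH, if_pos h, true_or, if_true]

lemma moranBoundaryStatH_of_ne (h0 : i ≠ 0) (hN : i ≠ N) :
    moranBoundaryStatH N μ i = moranBoundaryStatH N μ 0 * (μ / moranStepProb N i) := by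
  simp only [moranBoundaryStatH, moranStepProb, h0, hN, true_or, if_true, or_self, if_false,
    div_div_eq_mul_div]

lemma moranBoundaryStatH_zero_nonneg (hμ : 0 ≤ μ) : 0 ≤ moranBoundaryStatH N μ 0 := by
  have : 0 ≤ ∑ k ∈ Ico 1 N, (1 : ℝ) / k := sum_nonneg fun k _ => by positivity
  simp only [moranBoundaryStatH, true_or, if_true]
  positivity

lemma moranBoundaryStatH_zero_mul_le (hμ : 0 < μ) (hN : 1 < N) :
    moranBoundaryStatH N μ 0 * N ≤ (2 * μ * log N)⁻¹ := by
  have hlog : 0 < log N := log_pos (by exact_mod_cast hN)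
  have hN0 : (0 : ℝ) < N := by positivity
  rw [moranBoundaryStatH, if_pos (Or.inl rfl), inv_mul_eq_div, div_le_iff₀ (by positivity),
    inv_mul_eq_div, le_div_iff₀ (by positivity)]
  nlinarith [log_le_sum_Ico_one_div N, mul_pos hμ hN0]

lemma moranBoundaryRowEntropy_of_eq (h : i = 0 ∨ i = N) :
    moranBoundaryRowEntropy N μ i = binEntropy μ := by
  rw [moranBoundaryRowEntropy, if_pos h, binEntropy_eq_negMulLog_add_negMulLog_one_sub, negMulLog,
    negMulLog]
  ring

lemma moranBoundaryRowEntropy_of_ne (h0 : i ≠ 0) (hN : i ≠ N) :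
    moranBoundaryRowEntropy N μ i =
      2 * negMulLog (moranStepProb N i) + negMulLog (1 - 2 * moranStepProb N i) := by
  have h2q : 2 * (i : ℝ) * (N - i) / N ^ 2 = 2 * moranStepProb N i := by
    rw [moranStepProb]; ring
  rw [moranBoundaryRowEntropy, if_neg (by tauto), h2q, negMulLog, negMulLog, moranStepProb]
  ring

lemma moranBoundaryStatH_mul_rowEntropy_nonneg (hμ0 : 0 ≤ μ) (hμ1 : μ ≤ 1) (h : i ≤ N) :
    0 ≤ moranBoundaryStatH N μ i * moranBoundaryRowEntropy N μ i := by
  have hs0 := moranBoundaryStatH_zero_nonneg (N := N) hμ0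
  by_cases hb : i = 0 ∨ i = N
  · rw [moranBoundaryStatH_of_eq hb, moranBoundaryRowEntropy_of_eq hb]
    exact mul_nonneg hs0 (binEntropy_nonneg hμ0 hμ1)
  · push Not at hb
    have hq := moranStepProb_nonneg h
    have hq1 := two_mul_moranStepProb_le_one N i
    rw [moranBoundaryStatH_of_ne hb.1 hb.2, moranBoundaryRowEntropy_of_ne hb.1 hb.2]
    have := negMulLog_nonneg hq (by linarith)
    have := negMulLog_nonneg (x := 1 - 2 * moranStepProb N i) (by linarith) (by linarith)
    positivity

lemma moranBoundaryStatH_mul_rowEntropy_le_of_eq (hμ : 0 ≤ μ) (h : i = 0 ∨ i = N) :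
    moranBoundaryStatH N μ i * moranBoundaryRowEntropy N μ i ≤ moranBoundaryStatH N μ 0 := by
  rw [moranBoundaryStatH_of_eq h, moranBoundaryRowEntropy_of_eq h]
  exact mul_le_of_le_one_right (moranBoundaryStatH_zero_nonneg hμ) (binEntropy_le_one μ)

lemma moranBoundaryStatH_mul_rowEntropy_le (hμ : 0 ≤ μ) (h0 : 0 < i) (hN : i < N) :
    moranBoundaryStatH N μ i * moranBoundaryRowEntropy N μ i ≤
      moranBoundaryStatH N μ 0 * μ * (2 * log ((N : ℝ) / i) + 2 * log ((N : ℝ) / (N - i)) + 2) := by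
  have hq := moranStepProb_pos h0 hN
  have hs0 := moranBoundaryStatH_zero_nonneg (N := N) hμ
  rw [moranBoundaryStatH_of_ne h0.ne' hN.ne, moranBoundaryRowEntropy_of_ne h0.ne' hN.ne]
  calc moranBoundaryStatH N μ 0 * (μ / moranStepProb N i) *
        (2 * negMulLog (moranStepProb N i) + negMulLog (1 - 2 * moranStepProb N i))
      ≤ moranBoundaryStatH N μ 0 * (μ / moranStepProb N i) *
          (moranStepProb N i * (2 * log (moranStepProb N i)⁻¹ + 2)) := by
        gcongr
        exact two_mul_negMulLog_add_negMulLog_one_sub_two_mul_le (two_mul_moranStepProb_le_one N i)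
    _ = moranBoundaryStatH N μ 0 * μ * (2 * log (moranStepProb N i)⁻¹ + 2) := by
        field_simp
    _ = _ := by rw [log_moranStepProb_inv h0 hN]; ring

lemma moranBoundaryEntropyRate_nonneg (hμ0 : 0 ≤ μ) (hμ1 : μ ≤ 1) :
    0 ≤ moranBoundaryEntropyRate N μ :=
  sum_nonneg fun _ hi =>
    moranBoundaryStatH_mul_rowEntropy_nonneg hμ0 hμ1 (Nat.lt_succ_iff.1 (mem_range.1 hi))

lemma moranBoundaryEntropyRate_le_statH_zero_mul (hμ : 0 ≤ μ) (hN : 0 < N) :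
    moranBoundaryEntropyRate N μ ≤ moranBoundaryStatH N μ 0 * (2 + 6 * μ * N) := by
  have hint : ∑ i ∈ Ico 1 N, moranBoundaryStatH N μ i * moranBoundaryRowEntropy N μ i ≤
      moranBoundaryStatH N μ 0 * μ * (6 * N) := calc
    _ ≤ ∑ i ∈ Ico 1 N, moranBoundaryStatH N μ 0 * μ *
          (2 * log ((N : ℝ) / i) + 2 * log ((N : ℝ) / (N - i)) + 2) :=
        sum_le_sum fun i hi =>
          moranBoundaryStatH_mul_rowEntropy_le hμ (mem_Ico.1 hi).1 (mem_Ico.1 hi).2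
    _ = moranBoundaryStatH N μ 0 * μ * (4 * ∑ i ∈ Ico 1 N, log ((N : ℝ) / i) + 2 * (N - 1)) := by
        rw [← mul_sum, sum_add_distrib, sum_add_distrib, ← mul_sum, ← mul_sum,
          sum_Ico_log_div_sub_eq, sum_const, Nat.card_Ico, nsmul_eq_mul, Nat.cast_sub hN]
        ring
    _ ≤ moranBoundaryStatH N μ 0 * μ * (6 * N) :=
        mul_le_mul_of_nonneg_left (by linarith [sum_Ico_log_div_le N])
          (mul_nonneg (moranBoundaryStatH_zero_nonneg hμ) hμ)
  rw [moranBoundaryEntropyRate, sum_range_succ, range_eq_Ico, sum_eq_sum_Ico_succ_bot hN]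
  linarith [moranBoundaryStatH_mul_rowEntropy_le_of_eq (N := N) hμ (Or.inl rfl),
    moranBoundaryStatH_mul_rowEntropy_le_of_eq (N := N) hμ (Or.inr rfl)]

lemma moranBoundaryEntropyRate_le_div_log (hμ : 0 < μ) (hN : 1 < N) :
    moranBoundaryEntropyRate N μ ≤ (1 + 3 * μ) / (μ * log N) := by
  have hlog : 0 < log N := log_pos (by exact_mod_cast hN)
  have hN1 : (1 : ℝ) ≤ N := by exact_mod_cast hN.le
  have hs0 := moranBoundaryStatH_zero_nonneg (N := N) hμ.le
  calc moranBoundaryEntropyRate N μ ≤ moranBoundaryStatH N μ 0 * (2 + 6 * μ * N) :=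
        moranBoundaryEntropyRate_le_statH_zero_mul hμ.le (by omega)
    _ ≤ moranBoundaryStatH N μ 0 * N * (2 + 6 * μ) := by nlinarith
    _ ≤ (2 * μ * log N)⁻¹ * (2 + 6 * μ) := by
        gcongr
        exact moranBoundaryStatH_zero_mul_le hμ hN
    _ = (1 + 3 * μ) / (μ * log N) := by field_simp; ring

end

theorem moranBoundary_entropyRate_tendsto_zero_N (μ : ℝ) (hμ : μ ∈ Set.Ioo (0 : ℝ) 1) :
    Filter.Tendsto
      (fun N : ℕ =>
        ∑ i ∈ range (N + 1), moranBoundaryStatH N μ i * moranBoundaryRowEntropy N μ i)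
      Filter.atTop (nhds 0) := by
  obtain ⟨hμ0, hμ1⟩ := hμ
  have hbound : Filter.Tendsto (fun N : ℕ => (1 + 3 * μ) / (μ * log N)) Filter.atTop (nhds 0) :=
    tendsto_const_nhds.div_atTop
      ((tendsto_log_atTop.comp tendsto_natCast_atTop_atTop).const_mul_atTop hμ0)
  refine tendsto_of_tendsto_of_tendsto_of_le_of_le' tendsto_const_nhds hbound
    (Filter.Eventually.of_forall fun N => moranBoundaryEntropyRate_nonneg hμ0.le hμ1.le) ?_
  filter_upwards [Filter.eventually_gt_atTop 1] with N hN
  exact moranBoundaryEntropyRate_le_div_log hμ0 hN
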